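/- Let E ∈ ℝ^{IJ×R} have full column rank R, let {u₁, …, u_{IJ−R}} be a basis of N(E^⊤), and set Uᵢ = vec⁻¹(uᵢ) ∈ ℝ^{I×J}. Suppose the system of equations x^⊤ Uᵢ y = 0 (i = 1, …, IJ−R) has R real solutions (x_r, y_r), r = 1, …, R, such that the Khatri–Rao product Y ⊙ X of X = [x₁, …, x_R] and Y = [y₁, …, y_R] has full column rank R. Then there exist matrices X̃ ∈ ℝ^{I×R} and Ỹ ∈ ℝ^{J×R}, each of whose columns has Euclidean norm 1, and an invertible matrix W̃ ∈ ℝ^{R×R}, such that Ỹ ⊙ X̃ = E W̃. -/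

import Mathlib

/-!
Since `vec U ⬝ᵥ vec (x yᵀ) = xᵀ U y`, each column `y_r ⊗ x_r` of `Y ⊙ X` is orthogonal to the
basis `u_k` of `N(Eᵀ)`, hence lies in `N(Eᵀ)^⊥ = range E`; so `Y ⊙ X = E W`. Full column rank of
`Y ⊙ X` makes `W` invertible and every `x_r`, `y_r` nonzero, and normalizing the columns of `X`
and `Y` only rescales the columns of `Y ⊙ X`, which is absorbed into `W`.
-/

open Matrix

namespace Matrix

section Field

variable {K : Type*} [Field K] {m n : Type*} [Fintype n]

theorem mem_range_mulVecLin_iff_forall_dotProduct [Fintype m] (E : Matrix m n K) (v : m → K) :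
    v ∈ LinearMap.range E.mulVecLin ↔ ∀ w, Eᵀ *ᵥ w = 0 → w ⬝ᵥ v = 0 := by
  classical
  -- `range E` is cut out by the kernel of its dual map, which is `Eᵀ` under `dotProductEquiv`.
  rw [← Subspace.dualAnnihilator_dualCoannihilator_eq (W := LinearMap.range E.mulVecLin),
    Submodule.mem_dualCoannihilator, ← LinearMap.ker_dualMap_eq_dualAnnihilator_range,
    ← (dotProductEquiv K m).forall_congr_right]
  refine forall_congr' fun w => imp_congr_left ?_
  simp only [LinearMap.mem_ker, LinearMap.ext_iff]
  change (∀ c, w ⬝ᵥ E *ᵥ c = 0) ↔ _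
  simp only [dotProduct_mulVec, dotProduct_eq_zero_iff, mulVec_transpose]

theorem mem_range_mulVecLin_of_span_eq_ker [Fintype m] {E : Matrix m n K} {ι : Type*}
    {u : ι → m → K} (hspan : Submodule.span K (Set.range u) = LinearMap.ker Eᵀ.mulVecLin)
    {v : m → K} (hv : ∀ k, u k ⬝ᵥ v = 0) : v ∈ LinearMap.range E.mulVecLin := by
  classical
  rw [mem_range_mulVecLin_iff_forall_dotProduct]
  intro w hw
  have hw : w ∈ Submodule.span K (Set.range u) := hspan ▸ hw
  have hle : Submodule.span K (Set.range u) ≤ LinearMap.ker (dotProductEquiv K m v) :=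
    Submodule.span_le.mpr <| Set.range_subset_iff.mpr fun k => by
      simp [dotProduct_comm v, hv k]
  simpa [dotProduct_comm v] using hle hw

theorem exists_eq_mul_of_col_mem_range {o : Type*} {E : Matrix m n K} {M : Matrix m o K}
    (hM : ∀ k, M.col k ∈ LinearMap.range E.mulVecLin) : ∃ W : Matrix n o K, M = E * W := by
  choose c hc using hM
  refine ⟨(of c)ᵀ, ?_⟩
  refine Matrix.ext fun p k => ?_
  rw [mul_apply]
  simpa [mulVec, dotProduct] using (congrFun (hc k) p).symm

theorem mulVec_injective_of_rank_eq_card {A : Matrix m n K} (hA : A.rank = Fintype.card n) :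
    Function.Injective A.mulVec := by
  have h := LinearMap.finrank_range_add_finrank_ker A.mulVecLin
  rw [← rank, hA, Module.finrank_fintype_fun_eq_card, add_eq_left,
    Submodule.finrank_eq_zero, ker_mulVecLin_eq_bot_iff] at h
  exact fun a b hab => sub_eq_zero.mp (h _ (by rw [mulVec_sub, hab, sub_self]))

theorem col_ne_zero_of_rank_eq_card [DecidableEq n] {A : Matrix m n K}
    (hA : A.rank = Fintype.card n) (k : n) : A.col k ≠ 0 := by
  rw [← mulVec_single_one, ← mulVec_zero A]
  exact (mulVec_injective_of_rank_eq_card hA).ne (by simp)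

theorem isUnit_of_rank_mul_eq_card [DecidableEq n] {E : Matrix m n K} {W : Matrix n n K}
    (h : (E * W).rank = Fintype.card n) : IsUnit W := by
  refine mulVec_injective_iff_isUnit.mp (Function.Injective.of_comp (f := E.mulVec) ?_)
  simpa only [Function.comp_def, mulVec_mulVec] using mulVec_injective_of_rank_eq_card h

end Field

section KhatriRao

variable {R : Type*} {ι m n : Type*}

def khatriRao [Mul R] (B : Matrix n ι R) (A : Matrix m ι R) : Matrix (n × m) ι R :=
  of fun p k => B p.1 k * A p.2 k

theorem vec_dotProduct_col_khatriRao [CommSemiring R] [Fintype m] [Fintype n]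
    (U : Matrix m n R) (A : Matrix m ι R) (B : Matrix n ι R) (k : ι) :
    vec U ⬝ᵥ (khatriRao B A).col k = A.col k ⬝ᵥ U *ᵥ B.col k := by
  simp only [dotProduct, mulVec, Fintype.sum_prod_type, Finset.mul_sum, khatriRao]
  rw [Finset.sum_comm]
  simp [mul_left_comm, mul_comm]

theorem col_ne_zero_of_col_khatriRao_ne_zero [MulZeroClass R] {A : Matrix m ι R}
    {B : Matrix n ι R} {k : ι} (h : (khatriRao B A).col k ≠ 0) : A.col k ≠ 0 ∧ B.col k ≠ 0 := by
  constructor <;> rintro hk <;> refine h (funext fun p => ?_)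
  · simp [khatriRao, show A p.2 k = 0 from congrFun hk p.2]
  · simp [khatriRao, show B p.1 k = 0 from congrFun hk p.1]

theorem khatriRao_mul_diagonal [CommSemiring R] [Fintype ι] [DecidableEq ι] (B : Matrix n ι R)
    (A : Matrix m ι R) (b a : ι → R) :
    khatriRao (B * diagonal b) (A * diagonal a) = khatriRao B A * diagonal (b * a) := by
  ext p k
  simp only [khatriRao, mul_diagonal, of_apply, Pi.mul_apply]
  ring

end KhatriRao

section Real

variable {m n : Type*} [Fintype m]

noncomputable def colNorm (A : Matrix m n ℝ) (k : n) : ℝ :=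
  √(∑ i, A i k ^ 2)

theorem sum_sq_col_pos {A : Matrix m n ℝ} {k : n} (h : A.col k ≠ 0) : 0 < ∑ i, A i k ^ 2 := by
  simpa [dotProduct, sq] using dotProduct_self_star_pos_iff.mpr h

theorem colNorm_pos {A : Matrix m n ℝ} {k : n} (h : A.col k ≠ 0) : 0 < A.colNorm k :=
  Real.sqrt_pos.mpr (sum_sq_col_pos h)

theorem sum_sq_mul_diagonal_inv_colNorm [Fintype n] [DecidableEq n] {A : Matrix m n ℝ} {k : n}
    (h : A.col k ≠ 0) : ∑ i, ((A * diagonal fun k => (A.colNorm k)⁻¹) i k) ^ 2 = 1 := by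
  have hpos := sum_sq_col_pos h
  simp_rw [mul_diagonal, mul_pow, ← Finset.sum_mul, colNorm, inv_pow, Real.sq_sqrt hpos.le]
  exact mul_inv_cancel₀ hpos.ne'

end Real

end Matrix

theorem inverse_problem_solvable_general (I J R : ℕ)
    (E : Matrix (Fin J × Fin I) (Fin R) ℝ)
    (u : Fin (I * J - R) → (Fin J × Fin I → ℝ))
    (hspan : Submodule.span ℝ (Set.range u) = LinearMap.ker (Matrix.mulVecLin Eᵀ))
    (U : Fin (I * J - R) → Matrix (Fin I) (Fin J) ℝ)
    (hU : ∀ k i j, U k i j = u k (j, i))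
    (x : Fin R → Fin I → ℝ) (y : Fin R → Fin J → ℝ)
    (hsol : ∀ r k, (x r) ⬝ᵥ (U k).mulVec (y r) = 0)
    (hkr : (Matrix.of fun (p : Fin J × Fin I) r => y r p.1 * x r p.2).rank = R) :
    ∃ (Xt : Matrix (Fin I) (Fin R) ℝ) (Yt : Matrix (Fin J) (Fin R) ℝ)
      (W : Matrix (Fin R) (Fin R) ℝ),
      (∀ r, ∑ i, (Xt i r) ^ 2 = 1) ∧ (∀ r, ∑ j, (Yt j r) ^ 2 = 1) ∧ IsUnit W ∧
        (Matrix.of fun (p : Fin J × Fin I) r => Yt p.1 r * Xt p.2 r) = E * W := by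
  set X : Matrix (Fin I) (Fin R) ℝ := (of x)ᵀ
  set Y : Matrix (Fin J) (Fin R) ℝ := (of y)ᵀ
  have hrank : (khatriRao Y X).rank = Fintype.card (Fin R) := by rw [Fintype.card_fin]; exact hkr
  have hu k : u k = vec (U k) := funext fun p => (hU k p.2 p.1).symm
  obtain ⟨W, hW⟩ := exists_eq_mul_of_col_mem_range fun r =>
    mem_range_mulVecLin_of_span_eq_ker hspan fun k => by
      rw [hu, vec_dotProduct_col_khatriRao]
      exact hsol r k
  have hne r := col_ne_zero_of_col_khatriRao_ne_zero (col_ne_zero_of_rank_eq_card hrank r)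
  set a : Fin R → ℝ := fun r => (X.colNorm r)⁻¹
  set b : Fin R → ℝ := fun r => (Y.colNorm r)⁻¹
  have hba : IsUnit (b * a) := Pi.isUnit_iff.mpr fun r => isUnit_iff_ne_zero.mpr <|
    mul_ne_zero (inv_ne_zero (colNorm_pos (hne r).2).ne') (inv_ne_zero (colNorm_pos (hne r).1).ne')
  refine ⟨X * diagonal a, Y * diagonal b, W * diagonal (b * a),
    fun r => sum_sq_mul_diagonal_inv_colNorm (hne r).1,
    fun r => sum_sq_mul_diagonal_inv_colNorm (hne r).2,
    (isUnit_of_rank_mul_eq_card (hW ▸ hrank)).mul (isUnit_diagonal.mpr hba), ?_⟩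
  rw [← Matrix.mul_assoc, ← hW]
  exact khatriRao_mul_diagonal Y X b a

/-- Corollary 3.2: let `E ∈ ℝ^{IJ×R}` have full column rank `R`, let
`{u₁, …, u_{IJ-R}}` be a basis of `N(Eᵀ)` and `Uᵢ = vec⁻¹(uᵢ)`.  If the system
`xᵀ Uᵢ y = 0` (for all `i`) has `R` real solutions `(x_r, y_r)` such that the
Khatri–Rao product `Y ⊙ X` (with row `(j, i)`, column `r` entry `y_r(j) * x_r(i)`)
has full column rank `R`, then there exist `X̃ ∈ ℝ^{I×R}`, `Ỹ ∈ ℝ^{J×R}` with unit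
Euclidean-norm columns and an invertible `W̃ ∈ ℝ^{R×R}` with `Ỹ ⊙ X̃ = E W̃`. -/
theorem inverse_problem_solvable (I J R : ℕ)
    (E : Matrix (Fin J × Fin I) (Fin R) ℝ) (hE : E.rank = R)
    (u : Fin (I * J - R) → (Fin J × Fin I → ℝ))
    (hindep : LinearIndependent ℝ u)
    (hspan : Submodule.span ℝ (Set.range u) = LinearMap.ker (Matrix.mulVecLin Eᵀ))
    (U : Fin (I * J - R) → Matrix (Fin I) (Fin J) ℝ)
    (hU : ∀ k i j, U k i j = u k (j, i))
    (x : Fin R → Fin I → ℝ) (y : Fin R → Fin J → ℝ)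
    (hsol : ∀ r k, (x r) ⬝ᵥ (U k).mulVec (y r) = 0)
    (hkr : (Matrix.of fun (p : Fin J × Fin I) r => y r p.1 * x r p.2).rank = R) :
    ∃ (Xt : Matrix (Fin I) (Fin R) ℝ) (Yt : Matrix (Fin J) (Fin R) ℝ)
      (W : Matrix (Fin R) (Fin R) ℝ),
      (∀ r, ∑ i, (Xt i r) ^ 2 = 1) ∧ (∀ r, ∑ j, (Yt j r) ^ 2 = 1) ∧ IsUnit W ∧
        (Matrix.of fun (p : Fin J × Fin I) r => Yt p.1 r * Xt p.2 r) = E * W :=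
  inverse_problem_solvable_general I J R E u hspan U hU x y hsol hkr
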